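/- At λ = 2√ν, the value ∂W/∂y(−1,ν,2√ν) equals 2ν(1−√ν)³(1 + 5√ν + 12ν + 24ν^{3/2} + 15ν² + 7ν^{5/2}), and this is strictly positive for all 0 < ν < 1. -/

import Mathlib

noncomputable def Wy (v l y : ℝ) : ℝ :=
  2*v*(2*v^3*l^2*y^3 + 3*v*l*(v^2 + l^2 - 1)*y^2
    + (l^4 - v^4 - 1 + 2*v*(v + l^2))*y + l*(1 + l^2 - v^2))

lemma Wy_sq_two_mul_neg_one (s : ℝ) :
    Wy (s^2) (2*s) (-1)
      = 2*s^2*(1 - s)^3 *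
        (1 + 5*s + 12*s^2 + 24*s^2*s + 15*(s^2)^2 + 7*(s^2)^2*s) := by
  unfold Wy
  ring

theorem stmt11 (v : ℝ) (hv0 : 0 < v) (hv1 : v < 1) :
    Wy v (2*Real.sqrt v) (-1)
      = 2*v*(1 - Real.sqrt v)^3 *
        (1 + 5*Real.sqrt v + 12*v + 24*v*Real.sqrt v + 15*v^2 + 7*v^2*Real.sqrt v) ∧
    0 < Wy v (2*Real.sqrt v) (-1) := by
  obtain ⟨s, hs, rfl⟩ : ∃ s > 0, s^2 = v := ⟨√v, Real.sqrt_pos.2 hv0, Real.sq_sqrt hv0.le⟩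
  rw [Real.sqrt_sq hs.le, Wy_sq_two_mul_neg_one]
  have hs1 : s < 1 := (pow_lt_one_iff_of_nonneg hs.le two_ne_zero).1 hv1
  refine ⟨rfl, mul_pos (mul_pos (by positivity) (pow_pos (sub_pos.2 hs1) 3)) (by positivity)⟩
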